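/- arXiv:2312.13681 — 5 statements merged into one kernel-verified Lean document; each statement's English description precedes it below -/
import Mathlib

section
/- For every partition λ, q̂_λ(t) = Σ_{τ} (1−t)^{l(τ)} q_{λ−τ}(t), where the sum is over all compositions τ with τ ⊂ λ (i.e. τ_i ≤ λ_i for all i), and λ−τ = (λ_1−τ_1, λ_2−τ_2, …) is the componentwise difference. -/
open Finset

noncomputable section

abbrev FF : Type := RatFunc ℚ

/-- The ring Λ of symmetric functions over ℚ(t), as the polynomial ring in the
algebraically independent power sums `pp 1, pp 2, …`. -/
abbrev SymF : Type := MvPolynomial ℕ+ FF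

/-- The variable t of the ground field ℚ(t). -/
def tv : FF := RatFunc.X

/-- the power sum p_n -/
def pp (n : ℕ+) : SymF := MvPolynomial.X n

/-- q_n(a), defined by Σ_{n≥0} q_n(a) z^n = exp(Σ_{n≥1} ((1-a^n)/n) p_n z^n);
equivalently (taking the logarithmic derivative of the generating function)
by q_0 = 1 and n·q_n = Σ_{k=1}^{n} (1-a^k) p_k q_{n-k}. -/
def qn (a : FF) : ℕ → SymF
  | 0 => 1
  | n + 1 =>
      (((n : FF) + 1)⁻¹) • ∑ k ∈ Finset.range (n + 1),
        (MvPolynomial.C (1 - a ^ (k + 1))) * pp ⟨k + 1, Nat.succ_pos k⟩ * qn a (n - k)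
  termination_by n => n
  decreasing_by omega

/-- q̂_n(a), defined by Σ_{n≥0} q̂_n(a) z^n = exp(Σ_{n≥1} ((1-a^n)/n)(1+p_n) z^n);
equivalently by q̂_0 = 1 and n·q̂_n = Σ_{k=1}^{n} (1-a^k)(1+p_k) q̂_{n-k}. -/
def qhat (a : FF) : ℕ → SymF
  | 0 => 1
  | n + 1 =>
      (((n : FF) + 1)⁻¹) • ∑ k ∈ Finset.range (n + 1),
        (MvPolynomial.C (1 - a ^ (k + 1))) * (1 + pp ⟨k + 1, Nat.succ_pos k⟩) * qhat a (n - k)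
  termination_by n => n
  decreasing_by omega

/-- the number of nonzero parts of a composition -/
def ell {l : ℕ} (mu : Fin l → ℕ) : ℕ := (Finset.univ.filter fun i => mu i ≠ 0).card

/-- q̂_μ(a) = ∏_i q̂_{μ_i}(a). -/
def qhatProd (a : FF) {l : ℕ} (mu : Fin l → ℕ) : SymF := ∏ i, qhat a (mu i)

/-- q_μ(a) = ∏_i q_{μ_i}(a). -/
def qnProd (a : FF) {l : ℕ} (mu : Fin l → ℕ) : SymF := ∏ i, qn a (mu i)

/-! The generating functions `Q(z) = ∑ qₙ zⁿ` and `Q̂(z) = ∑ q̂ₙ zⁿ` satisfy `Q' = P Q` and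
`Q̂' = (P + G) Q̂`, where `P(z) = ∑ (1 - t^(k+1)) p_{k+1} zᵏ` and `G(z) = ∑ (1 - t^(k+1)) zᵏ`
is the logarithmic derivative of `(1 - t z) / (1 - z)`. Over a `ℚ`-algebra a solution of
`F' = R F` is determined by its constant term, so `Q̂ = Q · (1 - t z) / (1 - z)`, i.e.
`q̂ₙ = qₙ + (1 - t) ∑_{k ≥ 1} q_{n-k}`. Multiplying over the parts of `λ` and expanding the
product of these sums gives the formula. -/

theorem natCast_add_one_mul_inv_smul {K R : Type*} [Field K] [CharZero K] [Ring R] [Algebra K R]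
    (n : ℕ) (x : R) : ((n : R) + 1) * (((n : K) + 1)⁻¹ • x) = x := by
  rw [← Nat.cast_add_one, ← nsmul_eq_mul, ← Nat.cast_smul_eq_nsmul K, Nat.cast_add_one,
    smul_inv_smul₀ (Nat.cast_add_one_ne_zero n)]

theorem one_sub_mul_sum_range_one_sub_pow {A : Type*} [CommRing A] (a : A) (n : ℕ) :
    (1 - a) * ∑ k ∈ range n, (1 - a ^ (k + 1)) + (1 - a ^ (n + 1)) = (n + 1) * (1 - a) := by
  induction n with
  | zero => simp
  | succ n ih =>
    rw [sum_range_succ]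
    push_cast
    linear_combination ih

namespace PowerSeries

variable {A : Type*} [CommRing A]

theorem derivative_mk_eq_mk_mul_mk {f c : ℕ → A}
    (h : ∀ n : ℕ, ((n : A) + 1) * f (n + 1) = ∑ k ∈ range (n + 1), c k * f (n - k)) :
    d⁄dX A (mk f) = mk c * mk f := by
  ext n
  rw [coeff_derivative, coeff_mul,
    Nat.sum_antidiagonal_eq_sum_range_succ (fun i j => coeff i (mk c) * coeff j (mk f))]
  simp only [coeff_mk, mul_comm _ ((n : A) + 1), h n]

theorem eq_of_derivative_eq_mul [Algebra ℚ A] {F G R : A⟦X⟧}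
    (hF : d⁄dX A F = R * F) (hG : d⁄dX A G = R * G)
    (h0 : constantCoeff F = constantCoeff G) : F = G := by
  ext n
  induction n using Nat.strong_induction_on with
  | _ n ih =>
  cases n with
  | zero => simpa using h0
  | succ n =>
    have hn : IsUnit ((n : A) + 1) := by
      simpa using (Nat.cast_add_one_ne_zero n : (n : ℚ) + 1 ≠ 0).isUnit.map (algebraMap ℚ A)
    refine hn.mul_left_cancel ?_
    rw [mul_comm, ← coeff_derivative, hF, mul_comm ((n : A) + 1), ← coeff_derivative, hG,
      coeff_mul, coeff_mul]
    refine sum_congr rfl fun p hp => ?_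
    rw [ih p.2 (Nat.antidiagonal.snd_lt hp)]

/-- `(1 - a X) / (1 - X)` -/
def geomFactor (a : A) : A⟦X⟧ := mk fun n => if n = 0 then 1 else 1 - a

theorem derivative_geomFactor (a : A) :
    d⁄dX A (geomFactor a) = mk (fun k => 1 - a ^ (k + 1)) * geomFactor a := by
  refine derivative_mk_eq_mk_mul_mk fun n => ?_
  have hterm : ∀ k ∈ range n, (1 - a ^ (k + 1)) * (if n - k = 0 then 1 else 1 - a)
      = (1 - a) * (1 - a ^ (k + 1)) := fun k hk => by
    rw [if_neg (by have := mem_range.1 hk; omega), mul_comm]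
  rw [sum_range_succ, sum_congr rfl hterm, ← mul_sum, Nat.sub_self, if_pos rfl, mul_one,
    one_sub_mul_sum_range_one_sub_pow, if_neg n.succ_ne_zero]

end PowerSeries

open PowerSeries

def qnSeries (a : FF) : SymF⟦X⟧ := mk (qn a)

def qhatSeries (a : FF) : SymF⟦X⟧ := mk (qhat a)

def qnLogDeriv (a : FF) : SymF⟦X⟧ :=
  mk fun k => MvPolynomial.C (1 - a ^ (k + 1)) * pp ⟨k + 1, k.succ_pos⟩

theorem derivative_qnSeries (a : FF) :
    d⁄dX SymF (qnSeries a) = qnLogDeriv a * qnSeries a :=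
  derivative_mk_eq_mk_mul_mk fun n => by rw [qn, natCast_add_one_mul_inv_smul]

theorem derivative_qhatSeries (a : FF) :
    d⁄dX SymF (qhatSeries a) =
      (qnLogDeriv a + mk fun k => 1 - MvPolynomial.C a ^ (k + 1)) * qhatSeries a := by
  rw [qhatSeries, derivative_mk_eq_mk_mul_mk fun n => by rw [qhat, natCast_add_one_mul_inv_smul]]
  congr 1
  refine PowerSeries.ext fun k => ?_
  simp only [coeff_mk, qnLogDeriv, map_add, map_sub, map_one, map_pow]
  ring

theorem qhatSeries_eq_qnSeries_mul (a : FF) :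
    qhatSeries a = qnSeries a * geomFactor (MvPolynomial.C a) := by
  refine eq_of_derivative_eq_mul (derivative_qhatSeries a) ?_ ?_
  · rw [Derivation.leibniz, derivative_qnSeries, derivative_geomFactor, smul_eq_mul, smul_eq_mul]
    ring
  · simp [qhatSeries, qnSeries, geomFactor, qn, qhat]

theorem qhat_eq_sum_Iic (a : FF) (n : ℕ) :
    qhat a n = ∑ k ∈ Iic n, (if k = 0 then 1 else 1 - MvPolynomial.C a) * qn a (n - k) := by
  have h := congrArg (coeff n) (qhatSeries_eq_qnSeries_mul a)
  rw [mul_comm, coeff_mul, Nat.sum_antidiagonal_eq_sum_range_succ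
    (fun i j => coeff i (geomFactor (MvPolynomial.C a)) * coeff j (qnSeries a)),
    Nat.range_succ_eq_Iic] at h
  simpa only [qhatSeries, qnSeries, geomFactor, coeff_mk] using h

theorem qhatProd_eq_sum_general (l : ℕ) (lam : Fin l → ℕ) :
    qhatProd tv lam =
      ∑ τ ∈ Finset.Iic lam, MvPolynomial.C ((1 - tv) ^ ell τ) * qnProd tv (lam - τ) := by
  have weight (τ : Fin l → ℕ) :
      (MvPolynomial.C ((1 - tv) ^ ell τ) : SymF) =
        ∏ i, (if τ i = 0 then 1 else 1 - MvPolynomial.C tv) := by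
    rw [prod_ite, prod_const_one, one_mul, prod_const, ell]
    simp
  simp_rw [qhatProd, qhat_eq_sum_Iic, prod_univ_sum, qnProd, weight, ← prod_mul_distrib]
  rfl

/-- For every partition λ (with parts λ_1 ≥ … ≥ λ_l > 0),
q̂_λ(t) = Σ_{τ ⊂ λ} (1-t)^{l(τ)} q_{λ-τ}(t), summed over all compositions τ with
τ_i ≤ λ_i for all i, with λ-τ the componentwise difference. -/
theorem qhatProd_eq_sum (l : ℕ) (lam : Fin l → ℕ)
    (h_anti : ∀ i j : Fin l, i ≤ j → lam j ≤ lam i) (h_pos : ∀ i, 0 < lam i) :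
    qhatProd tv lam =
      ∑ τ ∈ Finset.Iic lam, MvPolynomial.C ((1 - tv) ^ ell τ) * qnProd tv (lam - τ) :=
  qhatProd_eq_sum_general l lam

end
end

section
/- Let k be a nonnegative integer and μ = (μ_1, …, μ_m) a partition of n. Then for every symmetric function f ∈ Λ, ⟨q̂_μ(t), h_k · f⟩ = Σ_{τ ∈ C(μ;k)} (1−t)^{l(τ)} ⟨q̂_{μ−τ}(t), f⟩, where h_k is the complete homogeneous symmetric function of degree k. Equivalently, the adjoint h_k^* of multiplication by h_k with respect to the Hall inner product satisfies h_k^* q̂_μ(t) = Σ_{τ ∈ C(μ;k)} (1−t)^{l(τ)} q̂_{μ−τ}(t). -/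
open Finset

noncomputable section

/-- z_λ, where the finitely supported function d records the multiplicities of the parts. -/
def zfac (d : ℕ+ →₀ ℕ) : FF :=
  ∏ i ∈ d.support, (((i : ℕ) : FF) ^ (d i) * (Nat.factorial (d i) : FF))

/-- The Hall inner product on Λ, determined by ⟨p_λ, p_μ⟩ = δ_{λμ} z_λ. -/
def hall (f g : SymF) : FF :=
  ∑ d ∈ f.support, MvPolynomial.coeff d f * MvPolynomial.coeff d g * zfac d

/-- the complete homogeneous symmetric function h_n, defined by
Σ_{n≥0} h_n z^n = exp(Σ_{n≥1} p_n z^n / n); equivalently by h_0 = 1 and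
n·h_n = Σ_{k=1}^{n} p_k h_{n-k} (Newton's identity). -/
def hh : ℕ → SymF
  | 0 => 1
  | n + 1 =>
      (((n : FF) + 1)⁻¹) • ∑ k ∈ Finset.range (n + 1),
        pp ⟨k + 1, Nat.succ_pos k⟩ * hh (n - k)
  termination_by n => n
  decreasing_by omega

/-- h_k for k ∈ ℤ, with h_k = 0 for k < 0. -/
def hZ (k : ℤ) : SymF := if 0 ≤ k then hh k.toNat else 0

/-- The Schur function s_λ (via the Jacobi–Trudi formula). -/
def schur {r : ℕ} (lam : Fin r → ℕ) : SymF :=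
  Matrix.det (Matrix.of fun i j : Fin r => hZ ((lam i : ℤ) + (j : ℤ) - (i : ℤ)))

/-- C(μ;k): compositions τ ⊂ μ with |τ| = k. -/
def Cset {l : ℕ} (mu : Fin l → ℕ) (k : ℕ) : Finset (Fin l → ℕ) :=
  (Finset.Iic mu).filter fun τ => ∑ i, τ i = k

/-!
Under the Hall product, multiplication by `p_n` is adjoint to `n ∂/∂p_n`, so by Newton's identity
the adjoint `h_K^*` of multiplication by `h_K` obeys Newton's recursion with `p_n` replaced by
`n ∂/∂p_n`. Since these operators are derivations, `h_K^*(fg) = ∑_{i+j=K} h_i^* f · h_j^* g`, i.e.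
`f ↦ ∑_K h_K^*(f) z^K` is a ring homomorphism `Λ → Λ⟦z⟧`. On one factor,
`n ∂q̂_m/∂p_n = (1 - t^n) q̂_{m-n}`, and with `∑_{i=1}^{K} (1 - t^i)(1 - t)^{[i<K]} = K (1 - t)`
this gives `h_K^* q̂_m = (1 - t) q̂_{m-K}` for `1 ≤ K ≤ m` and `0` for `K > m`. Expanding the
product of the series of the `q̂_{μ_i}` then yields the sum over `τ ∈ C(μ;k)`.
-/

open MvPolynomial

lemma Finset.Nat.sum_antidiagonal_antidiagonal_assoc {M : Type*} [AddCommMonoid M] (K : ℕ)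
    (G : ℕ → ℕ → ℕ → M) :
    ∑ p ∈ antidiagonal K, ∑ q ∈ antidiagonal p.2, G p.1 q.1 q.2 =
      ∑ p ∈ antidiagonal K, ∑ q ∈ antidiagonal p.1, G q.1 q.2 p.2 := by
  simp_rw [Finset.sum_sigma']
  refine Finset.sum_nbij' (fun x => ⟨(x.1.1 + x.2.1, x.2.2), (x.1.1, x.2.1)⟩)
    (fun x => ⟨(x.2.1, x.2.2 + x.1.2), (x.2.2, x.1.2)⟩) ?_ ?_ ?_ ?_ ?_ <;>
  rintro ⟨⟨a, b⟩, ⟨c, d⟩⟩ h <;> simp_all [mem_sigma, HasAntidiagonal.mem_antidiagonal] <;> omega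

lemma Finset.Nat.sum_antidiagonal_succ_smul_add {R M : Type*} [Semiring R] [AddCommMonoid M]
    [Module R M] (K : ℕ) (X : ℕ → ℕ → M) :
    ∑ p ∈ antidiagonal K, ((p.1 : R) + 1) • X (p.1 + 1) p.2 +
        ∑ p ∈ antidiagonal K, ((p.2 : R) + 1) • X p.1 (p.2 + 1) =
      ((K : R) + 1) • ∑ p ∈ antidiagonal (K + 1), X p.1 p.2 := by
  have weights : ∀ p ∈ antidiagonal (K + 1),
      ((K : R) + 1) • X p.1 p.2 = (p.1 : R) • X p.1 p.2 + (p.2 : R) • X p.1 p.2 := by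
    intro p hp
    rw [← add_smul, ← Nat.cast_add, HasAntidiagonal.mem_antidiagonal.1 hp, Nat.cast_succ]
  rw [smul_sum, sum_congr rfl weights, sum_add_distrib, Nat.sum_antidiagonal_succ,
    Nat.sum_antidiagonal_succ']
  simp

section NewtonOp

variable {R A : Type*} [Field R] [CommRing A] [Algebra R A] (D : ℕ+ → Derivation R A A)

/-- Newton's identity `K h_K = ∑_{k=1}^K p_k h_{K-k}` with `p_k` replaced by the operator `D k`,
applied first. -/
def newtonOp : ℕ → A →ₗ[R] A
  | 0 => LinearMap.id
  | n + 1 => ((n : R) + 1)⁻¹ •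
      ∑ k ∈ range (n + 1), newtonOp (n - k) ∘ₗ (D k.succPNat : A →ₗ[R] A)
  termination_by n => n
  decreasing_by omega

@[simp]
lemma newtonOp_zero_apply (f : A) : newtonOp D 0 f = f := by
  rw [newtonOp]; rfl

lemma newtonOp_succ_apply (n : ℕ) (f : A) :
    newtonOp D (n + 1) f =
      ((n : R) + 1)⁻¹ • ∑ p ∈ antidiagonal n, newtonOp D p.2 (D p.1.succPNat f) := by
  rw [newtonOp, Nat.sum_antidiagonal_eq_sum_range_succ_mk]
  simp [LinearMap.sum_apply]

lemma newtonOp_succ_one (n : ℕ) : newtonOp D (n + 1) (1 : A) = 0 := by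
  simp [newtonOp_succ_apply]

variable [CharZero R]

lemma smul_newtonOp_succ (n : ℕ) (f : A) :
    ((n : R) + 1) • newtonOp D (n + 1) f =
      ∑ p ∈ antidiagonal n, newtonOp D p.2 (D p.1.succPNat f) := by
  rw [newtonOp_succ_apply, smul_inv_smul₀ (Nat.cast_add_one_ne_zero n)]

lemma newtonOp_mul (K : ℕ) (f g : A) :
    newtonOp D K (f * g) = ∑ p ∈ antidiagonal K, newtonOp D p.1 f * newtonOp D p.2 g := by
  induction K using Nat.strong_induction_on generalizing f g with
  | _ K ih =>
  cases K with
  | zero => simp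
  | succ K =>
  have leibniz : ∑ p ∈ antidiagonal K, newtonOp D p.2 (D p.1.succPNat (f * g)) =
      ∑ p ∈ antidiagonal K, ∑ q ∈ antidiagonal p.2,
          newtonOp D q.1 (D p.1.succPNat f) * newtonOp D q.2 g +
        ∑ p ∈ antidiagonal K, ∑ q ∈ antidiagonal p.2,
          newtonOp D q.1 f * newtonOp D q.2 (D p.1.succPNat g) := by
    rw [← sum_add_distrib]
    refine sum_congr rfl fun p hp => ?_
    have hp : p.2 < K + 1 := by have := Nat.antidiagonal.snd_lt hp; omega
    rw [Derivation.leibniz, smul_eq_mul, smul_eq_mul, mul_comm g, map_add, ih _ hp, ih _ hp,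
      add_comm]
  have left : ∑ p ∈ antidiagonal K, ∑ q ∈ antidiagonal p.2,
      newtonOp D q.1 (D p.1.succPNat f) * newtonOp D q.2 g =
        ∑ p ∈ antidiagonal K, ((p.1 : R) + 1) • (newtonOp D (p.1 + 1) f * newtonOp D p.2 g) := by
    rw [Nat.sum_antidiagonal_antidiagonal_assoc K
      (fun b i j => newtonOp D i (D b.succPNat f) * newtonOp D j g)]
    refine sum_congr rfl fun p _ => ?_
    rw [← sum_mul, ← smul_newtonOp_succ, smul_mul_assoc]
  have right : ∑ p ∈ antidiagonal K, ∑ q ∈ antidiagonal p.2,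
      newtonOp D q.1 f * newtonOp D q.2 (D p.1.succPNat g) =
        ∑ p ∈ antidiagonal K, ((p.2 : R) + 1) • (newtonOp D p.1 f * newtonOp D (p.2 + 1) g) := by
    simp_rw [← Nat.sum_antidiagonal_swap (n := _) (f := fun q : ℕ × ℕ =>
      newtonOp D q.1 f * newtonOp D q.2 (D _ g)), Prod.fst_swap, Prod.snd_swap]
    rw [Nat.sum_antidiagonal_antidiagonal_assoc K
      (fun b j i => newtonOp D i f * newtonOp D j (D b.succPNat g)),
      ← Nat.sum_antidiagonal_swap]
    refine sum_congr rfl fun p _ => ?_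
    rw [Prod.fst_swap, Prod.snd_swap, ← mul_sum, ← smul_newtonOp_succ, mul_smul_comm]
  rw [newtonOp_succ_apply, leibniz, left, right,
    Nat.sum_antidiagonal_succ_smul_add K fun i j => newtonOp D i f * newtonOp D j g,
    inv_smul_smul₀ (Nat.cast_add_one_ne_zero K)]

def newtonSeries : A →+* PowerSeries A where
  toFun f := PowerSeries.mk fun K => newtonOp D K f
  map_one' := by ext (_ | K) <;> simp [newtonOp_succ_one]
  map_mul' f g := by ext K; simp [PowerSeries.coeff_mul, newtonOp_mul]
  map_zero' := by ext; simp
  map_add' f g := by ext; simp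

lemma coeff_newtonSeries (K : ℕ) (f : A) :
    PowerSeries.coeff K (newtonSeries D f) = newtonOp D K f := by
  simp [newtonSeries]

end NewtonOp

lemma zfac_add_single (d : ℕ+ →₀ ℕ) (n : ℕ+) :
    zfac (d + Finsupp.single n 1) = ((n : ℕ) : FF) * ((d n : FF) + 1) * zfac d := by
  have hz (e : ℕ+ →₀ ℕ) : zfac e =
      ((n : ℕ) : FF) ^ e n * (e n).factorial * zfac (e.erase n) :=
    (Finsupp.mul_prod_erase' e n (fun i k => ((i : ℕ) : FF) ^ k * k.factorial) (by simp)).symm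
  rw [hz, hz d, Finsupp.erase_add, Finsupp.erase_single, add_zero]
  simp only [Finsupp.coe_add, Pi.add_apply, Finsupp.single_eq_same, pow_succ, Nat.factorial_succ,
    Nat.cast_mul, Nat.cast_add, Nat.cast_one]
  ring

lemma hall_eq_sum_of_support_subset (f g : SymF) {S : Finset (ℕ+ →₀ ℕ)} (h : f.support ⊆ S) :
    hall f g = ∑ d ∈ S, coeff d f * coeff d g * zfac d :=
  sum_subset h fun d _ hd => by simp [notMem_support_iff.mp hd]

lemma hall_add_left (f f' g : SymF) : hall (f + f') g = hall f g + hall f' g := by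
  rw [hall_eq_sum_of_support_subset _ g support_add,
    hall_eq_sum_of_support_subset f g subset_union_left,
    hall_eq_sum_of_support_subset f' g subset_union_right, ← sum_add_distrib]
  simp only [coeff_add, add_mul]

lemma hall_smul_left (a : FF) (f g : SymF) : hall (a • f) g = a * hall f g := by
  rw [hall_eq_sum_of_support_subset _ g support_smul, hall, mul_sum]
  simp only [coeff_smul, smul_eq_mul, mul_assoc]

lemma hall_sum_left {ι : Type*} (s : Finset ι) (F : ι → SymF) (g : SymF) :
    hall (∑ i ∈ s, F i) g = ∑ i ∈ s, hall (F i) g :=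
  map_sum (AddMonoidHom.mk' (hall · g) (hall_add_left · · g)) F s

lemma hall_smul_right (a : FF) (f g : SymF) : hall f (a • g) = a * hall f g := by
  simp only [hall, coeff_smul, smul_eq_mul, mul_sum]
  exact sum_congr rfl fun d _ => by ring

lemma hall_sum_right {ι : Type*} (s : Finset ι) (f : SymF) (G : ι → SymF) :
    hall f (∑ i ∈ s, G i) = ∑ i ∈ s, hall f (G i) := by
  simp only [hall, coeff_sum, sum_mul, mul_sum]
  exact sum_comm

lemma hall_monomial_left (d : ℕ+ →₀ ℕ) (a : FF) (g : SymF) :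
    hall (monomial d a) g = a * coeff d g * zfac d := by
  classical
  rcases eq_or_ne a 0 with rfl | ha
  · simp [hall]
  · rw [hall, support_monomial, if_neg ha, sum_singleton, coeff_monomial, if_pos rfl]

def ppAdj (n : ℕ+) : Derivation FF SymF SymF := ((n : ℕ) : FF) • pderiv n

lemma hall_pp_mul (n : ℕ+) (f g : SymF) : hall f (pp n * g) = hall (ppAdj n f) g := by
  induction f using MvPolynomial.induction_on' with
  | monomial d a =>
    classical
    by_cases hd : d n = 0
    · rw [hall_monomial_left, ppAdj, Derivation.smul_apply, pderiv_monomial, hd]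
      simp [pp, coeff_X_mul', hd, hall]
    · obtain ⟨e, rfl⟩ : ∃ e, d = e + Finsupp.single n 1 :=
        ⟨d - Finsupp.single n 1, (tsub_add_cancel_of_le
          (Finsupp.single_le_iff.mpr (Nat.one_le_iff_ne_zero.mpr hd))).symm⟩
      rw [hall_monomial_left, pp, add_comm e, coeff_X_mul, ppAdj, Derivation.smul_apply,
        pderiv_monomial, add_tsub_cancel_left, smul_monomial, hall_monomial_left, add_comm,
        zfac_add_single]
      simp only [Finsupp.coe_add, Pi.add_apply, Finsupp.single_eq_same, Nat.cast_add, Nat.cast_one,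
        smul_eq_mul]
      ring
  | add p q hp hq => rw [hall_add_left, hp, hq, map_add, hall_add_left]

lemma hall_hh_mul (K : ℕ) (f g : SymF) : hall f (hh K * g) = hall (newtonOp ppAdj K f) g := by
  induction K using Nat.strong_induction_on generalizing f g with
  | _ K ih =>
  cases K with
  | zero => simp [hh]
  | succ K =>
  rw [hh, newtonOp_succ_apply, smul_mul_assoc, hall_smul_right, hall_smul_left, sum_mul,
    hall_sum_right, hall_sum_left, Nat.sum_antidiagonal_eq_sum_range_succ_mk]
  congr 1
  refine sum_congr rfl fun k _ => ?_
  rw [mul_assoc, ← ih (K - k) (by omega)]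
  exact hall_pp_mul k.succPNat f _

lemma qhat_zero (a : FF) : qhat a 0 = 1 := by rw [qhat]

lemma natCast_smul_qhat (a : FF) (m : ℕ) :
    (m : FF) • qhat a m =
      ∑ k ∈ range m, (1 - a ^ (k + 1)) • ((1 + pp k.succPNat) * qhat a (m - 1 - k)) := by
  cases m with
  | zero => simp
  | succ m =>
    rw [qhat, Nat.cast_succ, smul_inv_smul₀ (Nat.cast_add_one_ne_zero m)]
    simp only [C_mul', smul_mul_assoc, Nat.add_sub_cancel]
    rfl

lemma ppAdj_pp (n k : ℕ+) : ppAdj n (pp k) = if k = n then ((n : ℕ) : SymF) else 0 := by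
  by_cases h : k = n <;> simp [ppAdj, pp, pderiv_X, h, Nat.cast_smul_eq_nsmul]

lemma ppAdj_qhat_of_lt (a : FF) {n : ℕ+} {m : ℕ} (h : m < n) : ppAdj n (qhat a m) = 0 := by
  induction m using Nat.strong_induction_on with
  | _ m ih =>
  rcases Nat.eq_zero_or_pos m with rfl | hm
  · rw [qhat_zero, Derivation.map_one_eq_zero]
  have hsmul : (m : FF) • ppAdj n (qhat a m) = 0 := by
    rw [← Derivation.map_smul, natCast_smul_qhat, map_sum]
    refine sum_eq_zero fun k hk => ?_
    have hk : k < m := mem_range.1 hk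
    have hkn : k.succPNat ≠ n := fun h' => by
      have := congrArg PNat.val h'; simp at this; omega
    rw [Derivation.map_smul, Derivation.leibniz, ih _ (by omega) (by omega), map_add, ppAdj_pp,
      if_neg hkn]
    simp
  exact (smul_eq_zero.1 hsmul).resolve_left (Nat.cast_ne_zero.2 hm.ne')

lemma ppAdj_qhat_add (a : FF) (n : ℕ+) (r : ℕ) :
    ppAdj n (qhat a (r + n)) = (1 - a ^ (n : ℕ)) • qhat a r := by
  induction r using Nat.strong_induction_on with
  | _ r ih =>
  have hrn : ((r + n : ℕ) : FF) ≠ 0 := Nat.cast_ne_zero.2 (by have := n.pos; omega)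
  refine smul_right_injective SymF hrn ?_
  dsimp only
  rw [← Derivation.map_smul, natCast_smul_qhat, map_sum]
  simp_rw [Derivation.map_smul, Derivation.leibniz, smul_add, sum_add_distrib]
  have first : ∑ k ∈ range (r + n), (1 - a ^ (k + 1)) •
      (1 + pp k.succPNat) • ppAdj n (qhat a (r + n - 1 - k)) =
        (1 - a ^ (n : ℕ)) • ((r : FF) • qhat a r) := by
    rw [sum_range_add, natCast_smul_qhat, smul_sum, add_eq_left.2]
    · refine sum_congr rfl fun k hk => ?_
      rw [show r + n - 1 - k = r - 1 - k + n by have := mem_range.1 hk; omega,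
        ih _ (by have := mem_range.1 hk; omega), smul_eq_mul, mul_smul_comm, smul_comm]
    · exact sum_eq_zero fun j hj => by
        rw [ppAdj_qhat_of_lt a (by have := mem_range.1 hj; omega), smul_zero, smul_zero]
  have second : ∑ k ∈ range (r + n), (1 - a ^ (k + 1)) •
      qhat a (r + n - 1 - k) • ppAdj n (1 + pp k.succPNat) =
        (1 - a ^ (n : ℕ)) • ((n : ℕ) : FF) • qhat a r := by
    have hn : (n : ℕ) - 1 < r + n := by have := n.pos; omega
    rw [sum_eq_single_of_mem _ (mem_range.2 hn)]
    · have hsucc : ((n : ℕ) - 1).succPNat = n := PNat.eq (by simp; have := n.pos; omega)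
      rw [hsucc, Nat.sub_add_cancel n.pos, show r + n - 1 - (n - 1) = r by have := n.pos; omega,
        map_add, Derivation.map_one_eq_zero, zero_add, ppAdj_pp, if_pos rfl, smul_eq_mul, mul_comm,
        ← nsmul_eq_mul, ← Nat.cast_smul_eq_nsmul FF]
    · intro k _ hk
      have hkn : k.succPNat ≠ n := fun h' => hk (by
        have := congrArg PNat.val h'; simp at this; omega)
      rw [map_add, Derivation.map_one_eq_zero, zero_add, ppAdj_pp, if_neg hkn, smul_zero,
        smul_zero]
  rw [first, second, ← smul_add, ← add_smul, smul_comm, Nat.cast_add]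

lemma sum_antidiagonal_one_sub_pow_mul {R : Type*} [CommRing R] (a : R) (K : ℕ) :
    ∑ p ∈ antidiagonal K, (1 - a ^ (p.1 + 1)) * (if p.2 = 0 then 1 else 1 - a) =
      (K + 1) * (1 - a) := by
  cases K with
  | zero => simp
  | succ K =>
    rw [Nat.sum_antidiagonal_succ']
    simp only [if_pos, Nat.add_one_ne_zero, if_false, Nat.sum_antidiagonal_eq_sum_range_succ_mk]
    have geom := mul_neg_geom_sum a (K + 1)
    simp only [sub_mul, one_mul, sum_sub_distrib, sum_const, card_range, nsmul_eq_mul, pow_succ,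
      ← sum_mul] at *
    push_cast
    linear_combination (-a) * geom

lemma newtonOp_qhat_of_lt (a : FF) {K m : ℕ} (h : m < K) :
    newtonOp ppAdj K (qhat a m) = 0 := by
  induction K using Nat.strong_induction_on generalizing m with
  | _ K ih =>
  obtain ⟨K, rfl⟩ : ∃ K', K = K' + 1 := Nat.exists_eq_succ_of_ne_zero (by omega)
  rw [newtonOp_succ_apply]
  refine smul_eq_zero_of_right _ (sum_eq_zero fun p hp => ?_)
  have hp := HasAntidiagonal.mem_antidiagonal.1 hp
  by_cases hpm : p.1 + 1 ≤ m
  · obtain ⟨r, rfl⟩ : ∃ r, m = r + p.1.succPNat := ⟨m - (p.1 + 1), by simp; omega⟩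
    have hr : r < p.2 := by simp at h; omega
    rw [ppAdj_qhat_add, map_smul, ih p.2 (by omega) hr, smul_zero]
  · rw [ppAdj_qhat_of_lt a (by simp; omega), map_zero]

lemma newtonOp_succ_qhat_add (a : FF) (K r : ℕ) :
    newtonOp ppAdj (K + 1) (qhat a (r + (K + 1))) = (1 - a) • qhat a r := by
  induction K using Nat.strong_induction_on with
  | _ K ih =>
  have hterm : ∀ p ∈ antidiagonal K,
      newtonOp ppAdj p.2 (ppAdj p.1.succPNat (qhat a (r + (K + 1)))) =
        ((1 - a ^ (p.1 + 1)) * (if p.2 = 0 then 1 else 1 - a)) • qhat a r := by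
    rintro ⟨i, j⟩ hp
    have hp := HasAntidiagonal.mem_antidiagonal.1 hp
    dsimp only at hp ⊢
    rw [show r + (K + 1) = r + j + i.succPNat by simp; omega, ppAdj_qhat_add, map_smul, mul_smul,
      Nat.succPNat_coe]
    congr 1
    cases j with
    | zero => simp
    | succ j => rw [ih j (by omega)]; simp
  rw [newtonOp_succ_apply, sum_congr rfl hterm, ← sum_smul, sum_antidiagonal_one_sub_pow_mul,
    mul_smul, inv_smul_smul₀ (Nat.cast_add_one_ne_zero K)]

lemma newtonSeries_qhat (a : FF) (m : ℕ) :
    newtonSeries ppAdj (qhat a m) = ∑ j ∈ Iic m,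
      PowerSeries.C ((if j = 0 then 1 else 1 - a) • qhat a (m - j)) * PowerSeries.X ^ j := by
  refine PowerSeries.ext fun K => ?_
  simp only [coeff_newtonSeries, map_sum, PowerSeries.coeff_C_mul_X_pow, sum_ite_eq, mem_Iic]
  split_ifs with hKm hK0
  · simp [hK0]
  · obtain ⟨K, rfl⟩ := Nat.exists_eq_succ_of_ne_zero hK0
    obtain ⟨r, rfl⟩ := Nat.exists_eq_add_of_le' hKm
    rw [newtonOp_succ_qhat_add, Nat.add_sub_cancel]
  · exact newtonOp_qhat_of_lt a (not_le.1 hKm)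

lemma coeff_prod_sum_C_mul_X_pow {S : Type*} [CommSemiring S] {m : ℕ} (mu : Fin m → ℕ)
    (c : Fin m → ℕ → S) (k : ℕ) :
    PowerSeries.coeff k (∏ i, ∑ j ∈ Iic (mu i), PowerSeries.C (c i j) * PowerSeries.X ^ j) =
      ∑ τ ∈ Cset mu k, ∏ i, c i (τ i) := by
  simp only [prod_univ_sum, prod_mul_distrib, ← map_prod, prod_pow_eq_pow_sum, map_sum,
    PowerSeries.coeff_C_mul_X_pow, sum_ite, sum_const_zero, add_zero]
  refine sum_congr ?_ fun _ _ => rfl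
  ext τ
  simp [Cset, Fintype.mem_piFinset, Pi.le_def, eq_comm]

lemma prod_smul_qhat (a : FF) {m : ℕ} (mu τ : Fin m → ℕ) :
    ∏ i, (if τ i = 0 then 1 else 1 - a) • qhat a (mu i - τ i) =
      (1 - a) ^ ell τ • qhatProd a (mu - τ) := by
  rw [prod_smul, prod_ite, prod_const_one, one_mul, prod_const, ell]
  rfl

theorem hstar_qhatProd_general (k m : ℕ) (mu : Fin m → ℕ) :
    ∀ f : SymF,
      hall (qhatProd tv mu) (hh k * f) =
        ∑ τ ∈ Cset mu k, (1 - tv) ^ ell τ * hall (qhatProd tv (mu - τ)) f := by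
  intro f
  rw [hall_hh_mul, qhatProd, ← coeff_newtonSeries, map_prod]
  simp_rw [newtonSeries_qhat]
  rw [coeff_prod_sum_C_mul_X_pow, hall_sum_left]
  refine sum_congr rfl fun τ _ => ?_
  rw [prod_smul_qhat, hall_smul_left]

/-- Let k ≥ 0 and μ = (μ_1,…,μ_m) a partition of n.  For every f ∈ Λ,
⟨q̂_μ(t), h_k·f⟩ = Σ_{τ ∈ C(μ;k)} (1-t)^{l(τ)} ⟨q̂_{μ-τ}(t), f⟩
(i.e. h_k^* q̂_μ(t) = Σ_{τ ∈ C(μ;k)} (1-t)^{l(τ)} q̂_{μ-τ}(t)). -/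
theorem hstar_qhatProd (k n m : ℕ) (mu : Fin m → ℕ)
    (h_anti : ∀ i j : Fin m, i ≤ j → mu j ≤ mu i) (h_pos : ∀ i, 0 < mu i)
    (h_sum : ∑ i, mu i = n) :
    ∀ f : SymF,
      hall (qhatProd tv mu) (hh k * f) =
        ∑ τ ∈ Cset mu k, (1 - tv) ^ ell τ * hall (qhatProd tv (mu - τ)) f :=
  hstar_qhatProd_general k m mu

end
end

section
/- Let μ be a partition of n and 0 < m ≤ n. Then the one-row character satisfies χ^{(m)}_μ(q) = (q^n/(q−1)^{l(μ)}) · Σ_{τ ∈ C(μ;m)} (1−q^{-1})^{l(τ)+l(μ−τ)}. -/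
open Finset

noncomputable section

/-- The variable q of ℚ(q) (the same as tv, renamed for readability). -/
def qv : FF := RatFunc.X

/-- The irreducible character χ^λ_μ(q) of the q-rook monoid algebra R_n(q), via the
Frobenius formula χ^λ_μ(q) = (q^{|μ|}/(q-1)^{l(μ)}) ⟨q̂_μ(q⁻¹), s_λ⟩. -/
def chi {r l : ℕ} (lam : Fin r → ℕ) (mu : Fin l → ℕ) : FF :=
  qv ^ (∑ i, mu i) / (qv - 1) ^ (ell mu) * hall (qhatProd qv⁻¹ mu) (schur lam)


/-!
Pairing with `s_(m) = h_m` is linear, and `⟨p_λ, h_m⟩ = 1` for every `λ ⊢ m`, so `⟨f, h_m⟩` is the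
coefficient of `X^m` in the specialization `p_k ↦ X^k` of `f`. This specialization sends the
generating function of the `q̂_n(a)` to `(1 - a z)(1 - a X z) / ((1 - z)(1 - X z))`: both power
series in `z` have the logarithmic derivative `Σ_k (1 - a^k)(1 + X^k) z^k` and constant term `1`.
Hence `q̂_n(a)` specializes to `Σ_j c_j c_{n-j} X^j` with `c_0 = 1` and `c_j = 1 - a` for `j > 0`,
and the coefficient of `X^m` in the product over the parts of `μ` is the sum over `C(μ; m)`.
-/

/-- The coefficients of `(1 - a z) / (1 - z)`. -/
def rookCoeff {R : Type*} [CommRing R] (a : R) (n : ℕ) : R := if n = 0 then 1 else 1 - a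

theorem map_rookCoeff {R S : Type*} [CommRing R] [CommRing S] (φ : R →+* S) (a : R) (n : ℕ) :
    φ (rookCoeff a n) = rookCoeff (φ a) n := by
  unfold rookCoeff
  split_ifs <;> simp

theorem prod_rookCoeff {R : Type*} [CommRing R] (a : R) {l : ℕ} (τ : Fin l → ℕ) :
    ∏ i, rookCoeff a (τ i) = (1 - a) ^ ell τ := by
  rw [ell, ← prod_const, prod_filter]
  simp [rookCoeff, ite_not]

namespace PowerSeries

variable {R : Type*} [CommRing R]

theorem coeff_X_mul_derivative (F : R⟦X⟧) (n : ℕ) :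
    coeff n (X * d⁄dX R F) = n * coeff n F := by
  cases n with
  | zero => simp
  | succ n => rw [coeff_succ_X_mul, coeff_derivative, mul_comm]; push_cast; rfl

@[simp]
theorem constantCoeff_rescale (r : R) (F : R⟦X⟧) :
    constantCoeff (rescale r F) = constantCoeff F := by
  rw [← coeff_zero_eq_constantCoeff_apply, coeff_rescale, pow_zero, one_mul,
    coeff_zero_eq_constantCoeff_apply]

theorem X_mul_derivative_mul {L M F G : R⟦X⟧} (hF : X * d⁄dX R F = L * F)
    (hG : X * d⁄dX R G = M * G) : X * d⁄dX R (F * G) = (L + M) * (F * G) := by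
  rw [Derivation.leibniz, smul_eq_mul, smul_eq_mul]
  linear_combination G * hF + F * hG

theorem X_mul_derivative_rescale {L F : R⟦X⟧} (r : R) (hF : X * d⁄dX R F = L * F) :
    X * d⁄dX R (rescale r F) = rescale r L * rescale r F := by
  rw [← map_mul, ← hF]
  ext n
  simp only [coeff_X_mul_derivative, coeff_rescale]
  ring

theorem eq_of_X_mul_derivative_eq [IsAddTorsionFree R] {L F G : R⟦X⟧}
    (hL : constantCoeff L = 0) (h0 : constantCoeff F = constantCoeff G)
    (hF : X * d⁄dX R F = L * F) (hG : X * d⁄dX R G = L * G) : F = G := by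
  ext n
  induction n using Nat.strong_induction_on with
  | _ n ih =>
    rcases n with _ | n
    · simpa using h0
    have hcoeff : ∀ H : R⟦X⟧, X * d⁄dX R H = L * H →
        (n + 1) • coeff (n + 1) H =
          ∑ p ∈ antidiagonal (n + 1), coeff p.1 L * coeff p.2 H := by
      intro H hH
      rw [← coeff_mul, ← hH, coeff_X_mul_derivative, nsmul_eq_mul]
    refine nsmul_right_injective n.succ_ne_zero ?_
    simp only [hcoeff F hF, hcoeff G hG]
    refine sum_congr rfl fun p hp => ?_
    rcases p with ⟨_ | i, j⟩
    · simp [hL]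
    · rw [ih j (by simp at hp; omega)]

theorem X_mul_derivative_mk_of_recursion {K : Type*} [Field K] [CharZero K] [Algebra K R]
    {ℓ f : ℕ → R} (hℓ : ℓ 0 = 0)
    (hf : ∀ n, f (n + 1) = ((n : K) + 1)⁻¹ • ∑ k ∈ range (n + 1), ℓ (k + 1) * f (n - k)) :
    X * d⁄dX R (mk f) = mk ℓ * mk f := by
  ext (_ | n)
  · simp [hℓ]
  rw [coeff_X_mul_derivative, coeff_mul, Nat.sum_antidiagonal_eq_sum_range_succ
    (fun i j => coeff i (mk ℓ) * coeff j (mk f)), sum_range_succ']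
  simp only [coeff_mk, hf, hℓ, zero_mul, add_zero, Nat.succ_sub_succ]
  rw [← nsmul_eq_mul, ← Nat.cast_smul_eq_nsmul K, smul_smul, Nat.cast_add_one,
    mul_inv_cancel₀ (Nat.cast_add_one_ne_zero n), one_smul]

def rookSeries (a : R) : R⟦X⟧ := mk (rookCoeff a)

theorem rookSeries_eq (a : R) : rookSeries a = (1 - C a * X) * mk 1 := by
  ext (_ | n)
  · simp [rookSeries, rookCoeff]
  · simp [rookSeries, rookCoeff, sub_mul, mul_assoc, coeff_succ_X_mul]

theorem X_mul_derivative_rookSeries (a : R) :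
    X * d⁄dX R (rookSeries a) = mk (fun n => 1 - a ^ n) * rookSeries a := by
  set g : R⟦X⟧ := mk 1
  have hL : mk (fun n => 1 - a ^ n) = g - rescale a g := by
    ext n
    simp [g, coeff_rescale]
  have hg : g * (1 - X) = 1 := mk_one_mul_one_sub_eq_one R
  have hga : rescale a g * (1 - C a * X) = 1 := by
    rw [← rescale_X, ← map_one (rescale a), ← map_sub, ← map_mul, hg]
  have hdg : d⁄dX R g * (1 - X) = g := by
    have := congrArg (d⁄dX R) hg
    simp only [Derivation.leibniz, map_sub, derivative_one, derivative_X, smul_eq_mul] at this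
    linear_combination this
  simp only [hL, rookSeries_eq, Derivation.leibniz, map_sub, derivative_one, derivative_C,
    derivative_X, smul_eq_mul]
  linear_combination (-(1 - C a * X) * d⁄dX R g) * hg + g * hga +
    ((1 - C a * X) * g - (1 - C a * X)) * hdg

end PowerSeries

theorem coeff_prod_sum_C_mul_X_pow_s8 {K : Type*} [CommSemiring K] {l : ℕ} (N : Fin l → ℕ)
    (f : Fin l → ℕ → K) (m : ℕ) :
    (∏ i, ∑ j ∈ range (N i + 1), Polynomial.C (f i j) * Polynomial.X ^ j).coeff m =
      ∑ τ ∈ Cset N m, ∏ i, f i (τ i) := by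
  classical
  rw [prod_univ_sum, Polynomial.finsetSum_coeff]
  simp_rw [prod_mul_distrib, ← map_prod, prod_pow_eq_pow_sum, Polynomial.coeff_C_mul_X_pow]
  rw [← sum_filter]
  congr 1
  ext τ
  simp [Cset, Fintype.mem_piFinset, Pi.le_def, eq_comm]

open Finsupp in
theorem weight_eq_sum_range (d : ℕ+ →₀ ℕ) {N : ℕ} (h : weight PNat.val d ≤ N) :
    weight PNat.val d = ∑ k ∈ range N, d k.succPNat * (k + 1) := by
  have hsupp : d.support ⊆ (range N).map ⟨Nat.succPNat, Nat.succPNat_injective⟩ := by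
    intro i hi
    have : (i : ℕ) ≤ N := (le_weight_of_ne_zero' _ (mem_support_iff.mp hi)).trans h
    exact mem_map.mpr ⟨i.natPred, by have := i.natPred_add_one; simp; omega, by simp⟩
  rw [weight_apply, Finsupp.sum,
    sum_subset hsupp (fun i _ hi => by simp [notMem_support_iff.mp hi]), sum_map]
  simp [mul_comm]

theorem zfac_add_single_one (d : ℕ+ →₀ ℕ) (j : ℕ+) :
    zfac (d + Finsupp.single j 1) = zfac d * j * (d j + 1) := by
  let g : ℕ+ → ℕ → FF := fun i k => ((i : ℕ) : FF) ^ k * k.factorial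
  have hg : ∀ i, g i 0 = 1 := fun i => by simp [g]
  change (d + Finsupp.single j 1).prod g = d.prod g * j * (d j + 1)
  rw [← Finsupp.mul_prod_erase' _ j g hg, ← Finsupp.mul_prod_erase' d j g hg]
  simp [g, Finsupp.erase_add, pow_succ, Nat.factorial_succ]
  ring

theorem coeff_pp_mul_mul_zfac (j : ℕ+) (f : SymF) (d : ℕ+ →₀ ℕ) :
    MvPolynomial.coeff d (pp j * f) * zfac d =
      (j : FF) * d j * (MvPolynomial.coeff (d - Finsupp.single j 1) f *
        zfac (d - Finsupp.single j 1)) := by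
  rw [pp, MvPolynomial.coeff_X_mul']
  split_ifs with hj
  · have hdj : d j ≠ 0 := Finsupp.mem_support_iff.mp hj
    have hz : zfac d = zfac (d - Finsupp.single j 1) * j * (d j) := by
      conv_lhs => rw [← Finsupp.sub_add_single_one_cancel hdj]
      rw [zfac_add_single_one]
      simp [Nat.cast_sub (Nat.one_le_iff_ne_zero.mpr hdj)]
    rw [hz]
    ring
  · simp [Finsupp.notMem_support_iff.mp hj]

/-- The expansion `h_m = Σ_{λ ⊢ m} p_λ / z_λ`. -/
theorem coeff_hh_mul_zfac (m : ℕ) (d : ℕ+ →₀ ℕ) :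
    MvPolynomial.coeff d (hh m) * zfac d = if Finsupp.weight PNat.val d = m then 1 else 0 := by
  induction m using Nat.strong_induction_on generalizing d with
  | _ m ih =>
    rcases m with _ | n
    · rw [hh, MvPolynomial.coeff_one]
      by_cases hd : d = 0
      · simp [hd, zfac]
      · have : Finsupp.NonTorsionWeight ℕ PNat.val := ⟨fun h => by simpa using h⟩
        simp [Ne.symm hd, hd, Finsupp.weight_eq_zero_iff_eq_zero]
    have hterm : ∀ k ∈ range (n + 1),
        MvPolynomial.coeff d (pp k.succPNat * hh (n - k)) * zfac d =
          (d k.succPNat * (k + 1) : ℕ) * if Finsupp.weight PNat.val d = n + 1 then 1 else 0 := by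
      intro k hk
      rw [coeff_pp_mul_mul_zfac, ih _ (by simp at hk; omega)]
      by_cases hdk : d k.succPNat = 0
      · simp [hdk]
      have hw := Finsupp.weight_sub_single_add (w := PNat.val) hdk
      have hkn : k ≤ n := by simpa [Nat.lt_succ_iff] using hk
      simp only [Nat.succPNat_coe, Nat.succ_eq_add_one] at hw
      have hiff : Finsupp.weight PNat.val (d - Finsupp.single k.succPNat 1) = n - k ↔
          Finsupp.weight PNat.val d = n + 1 := by omega
      rw [if_congr hiff rfl rfl, Nat.succPNat_coe]
      push_cast
      ring
    rw [hh, MvPolynomial.coeff_smul, smul_eq_mul, mul_assoc, MvPolynomial.coeff_sum, sum_mul]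
    refine (congrArg _ (sum_congr rfl hterm)).trans ?_
    rw [← sum_mul]
    split_ifs with hw
    · rw [mul_one, ← Nat.cast_sum, ← weight_eq_sum_range d hw.le, hw]
      push_cast
      exact inv_mul_cancel₀ (Nat.cast_add_one_ne_zero n)
    · rw [mul_zero, mul_zero]

theorem schur_one_row (m : ℕ) : schur (fun _ : Fin 1 => m) = hh m := by
  simp [schur, hZ]

def specX : SymF →ₐ[FF] Polynomial FF :=
  MvPolynomial.aeval fun i => Polynomial.X ^ (i : ℕ)

theorem specX_pp_succ (k : ℕ) :
    specX (pp ⟨k + 1, Nat.succ_pos k⟩) = Polynomial.X ^ (k + 1) :=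
  MvPolynomial.aeval_X _ _

theorem specX_monomial (d : ℕ+ →₀ ℕ) (r : FF) :
    specX (MvPolynomial.monomial d r) =
      Polynomial.C r * Polynomial.X ^ Finsupp.weight PNat.val d := by
  rw [specX, MvPolynomial.aeval_monomial, Polynomial.algebraMap_eq, Finsupp.weight_apply,
    Finsupp.prod, Finsupp.sum, ← prod_pow_eq_pow_sum]
  simp_rw [← pow_mul, smul_eq_mul, mul_comm]

theorem coeff_specX (f : SymF) (m : ℕ) :
    (specX f).coeff m =
      ∑ d ∈ f.support, if Finsupp.weight PNat.val d = m then MvPolynomial.coeff d f else 0 := by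
  conv_lhs => rw [f.as_sum]
  rw [map_sum, Polynomial.finsetSum_coeff]
  simp only [specX_monomial, Polynomial.coeff_C_mul_X_pow, @eq_comm _ m]

theorem hall_hh_eq_coeff_specX (f : SymF) (m : ℕ) : hall f (hh m) = (specX f).coeff m := by
  simp [hall, coeff_specX, mul_assoc, coeff_hh_mul_zfac]

open PowerSeries in
theorem specX_qhat (a : FF) (n : ℕ) :
    specX (qhat a n) = ∑ j ∈ range (n + 1),
      Polynomial.C (rookCoeff a j * rookCoeff a (n - j)) * Polynomial.X ^ j := by
  set A := rookSeries (Polynomial.C a)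
  set L : (Polynomial FF)⟦X⟧ := PowerSeries.mk fun k => 1 - Polynomial.C a ^ k
  have hL : rescale Polynomial.X L + L =
      PowerSeries.mk fun k => Polynomial.C (1 - a ^ k) * (1 + Polynomial.X ^ k) := by
    ext k : 1
    simp [L, coeff_rescale]
    ring
  have hF : X * d⁄dX _ (PowerSeries.mk fun n => specX (qhat a n)) =
      (rescale Polynomial.X L + L) * PowerSeries.mk fun n => specX (qhat a n) := by
    rw [hL]
    refine X_mul_derivative_mk_of_recursion (K := FF) (by simp) fun n => ?_
    rw [qhat, map_smul, map_sum]
    simp [specX_pp_succ]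
  have hG := X_mul_derivative_mul
    (X_mul_derivative_rescale Polynomial.X (X_mul_derivative_rookSeries (Polynomial.C a)))
    (X_mul_derivative_rookSeries (Polynomial.C a))
  have hL0 : constantCoeff (rescale Polynomial.X L + L) = 0 := by
    simp [L]
  have h0 : constantCoeff (PowerSeries.mk fun n => specX (qhat a n)) =
      constantCoeff (rescale Polynomial.X A * A) := by
    simp [A, rookSeries, rookCoeff, qhat]
  rw [← coeff_mk n fun n => specX (qhat a n), eq_of_X_mul_derivative_eq hL0 h0 hF hG, coeff_mul,
    Nat.sum_antidiagonal_eq_sum_range_succ fun i j => coeff i (rescale Polynomial.X A) * coeff j A]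
  refine sum_congr rfl fun j _ => ?_
  simp only [A, rookSeries, coeff_rescale, coeff_mk, map_mul, map_rookCoeff]
  ring

theorem chi_one_row_general (l n m : ℕ) (mu : Fin l → ℕ)
    (hmu_sum : ∑ i, mu i = n) :
    chi (fun _ : Fin 1 => m) mu =
      qv ^ n / (qv - 1) ^ ell mu *
        ∑ τ ∈ Cset mu m, (1 - qv⁻¹) ^ (ell τ + ell (mu - τ)) := by
  rw [chi, schur_one_row, hall_hh_eq_coeff_specX, hmu_sum, qhatProd, map_prod]
  simp only [specX_qhat, coeff_prod_sum_C_mul_X_pow_s8]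
  refine congrArg _ (sum_congr rfl fun τ _ => ?_)
  rw [prod_mul_distrib, prod_rookCoeff, pow_add]
  exact congrArg _ (prod_rookCoeff _ (mu - τ))

/-- For a partition μ ⊢ n and 0 < m ≤ n, the one-row character satisfies
χ^{(m)}_μ(q) = (q^n/(q-1)^{l(μ)})·Σ_{τ ∈ C(μ;m)} (1-q⁻¹)^{l(τ)+l(μ-τ)}. -/
theorem chi_one_row (l n m : ℕ) (mu : Fin l → ℕ)
    (hmu_anti : ∀ i j : Fin l, i ≤ j → mu j ≤ mu i) (hmu_pos : ∀ i, 0 < mu i)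
    (hmu_sum : ∑ i, mu i = n) (hm : 0 < m) (hmn : m ≤ n) :
    chi (fun _ : Fin 1 => m) mu =
      qv ^ n / (qv - 1) ^ ell mu *
        ∑ τ ∈ Cset mu m, (1 - qv⁻¹) ^ (ell τ + ell (mu - τ)) :=
  chi_one_row_general l n m mu hmu_sum

end
end

section
/- For a partition μ = (μ_1, …, μ_l) of n with l = l(μ) nonzero parts, Σ_{i≥0} Σ_{j≥0} a_{ij}(μ;q) q^{i+j} = ∏_{i=1}^{l} (q−1) q^{μ_i−1} = (q−1)^l q^{n−l}. -/
/-!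
Expanding `a_{ij}(μ;q) q^{i+j}`, the double sum runs over all pairs `τ, θ` with `τ + θ ≤ μ`, and
the summand factors over the coordinates. Hence the total is `∏ᵢ S(μᵢ)` with
`S(m) = Σ_{a+b≤m} E(a) q^a · E(b) q^b · V(m-a-b)`, where `E = nzWeight (1 - q⁻¹)` and
`V = nzWeight (1 - q)`. The sequences `E(b) q^b` and `V(c)` are inverse under
convolution (their generating functions are `(1-z)/(1-qz)` and `(1-qz)/(1-z)`), so summing over `b`
kills every term except `a = m`, and `S(m) = (1 - q⁻¹) q^m = (q-1) q^{m-1}`.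
-/

open Finset

noncomputable section

/-- a_{ij}(μ;t) = Σ_{τ ∈ C(μ;i)} Σ_{θ ∈ C(μ-τ;j)} (1-t⁻¹)^{l(τ)+l(θ)} (1-t)^{l(μ-τ-θ)}.
(This expression automatically vanishes when i + j > |μ|, since then the index set
of the inner sum is empty.) -/
def aco {l : ℕ} (t : FF) (mu : Fin l → ℕ) (i j : ℕ) : FF :=
  ∑ τ ∈ Cset mu i, ∑ θ ∈ Cset (mu - τ) j,
    (1 - t⁻¹) ^ (ell τ + ell θ) * (1 - t) ^ ell (mu - τ - θ)

/-- b_{ij}(μ;t) = Σ_{τ ∈ C(μ;i)} Σ_{θ ∈ C(μ-τ;j)} (1-t⁻¹)^{l(τ)+l(θ)+l(μ-τ-θ)}.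
(This expression automatically vanishes when i + j > |μ|.) -/
def bco {l : ℕ} (t : FF) (mu : Fin l → ℕ) (i j : ℕ) : FF :=
  ∑ τ ∈ Cset mu i, ∑ θ ∈ Cset (mu - τ) j,
    (1 - t⁻¹) ^ (ell τ + ell θ + ell (mu - τ - θ))

def nzWeight {M : Type*} [One M] (x : M) (a : ℕ) : M := if a = 0 then 1 else x

section OneCoordinate

variable {K : Type*} [Field K] {t : K}

theorem sum_range_nzWeight_mul_pow (ht : t ≠ 0) (k : ℕ) :
    ∑ b ∈ range (k + 1), nzWeight (1 - t⁻¹) b * t ^ b = t ^ k := by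
  induction k with
  | zero => simp [nzWeight]
  | succ k ih =>
    rw [sum_range_succ, ih, nzWeight, if_neg k.succ_ne_zero]
    field_simp
    ring

theorem sum_range_nzWeight_mul_pow_mul_nzWeight_sub (ht : t ≠ 0) (k : ℕ) :
    ∑ b ∈ range (k + 1), nzWeight (1 - t⁻¹) b * t ^ b * nzWeight (1 - t) (k - b) =
      if k = 0 then 1 else 0 := by
  cases k with
  | zero => simp [nzWeight]
  | succ k =>
    have hV : ∀ b ∈ range (k + 1), nzWeight (1 - t) (k + 1 - b) = 1 - t := fun b hb => by
      rw [nzWeight, if_neg (by grind)]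
    rw [sum_range_succ, sum_congr rfl fun b hb => by rw [hV b hb], ← sum_mul,
      sum_range_nzWeight_mul_pow ht, Nat.sub_self, nzWeight, nzWeight, if_neg k.succ_ne_zero,
      if_pos rfl, if_neg k.succ_ne_zero]
    field_simp
    ring

def acoWeight (t : K) (m a b : ℕ) : K :=
  nzWeight (1 - t⁻¹) a * t ^ a * (nzWeight (1 - t⁻¹) b * t ^ b * nzWeight (1 - t) (m - a - b))

theorem sum_Iic_sum_Iic_sub_acoWeight (ht : t ≠ 0) {m : ℕ} (hm : 0 < m) :
    ∑ a ∈ Iic m, ∑ b ∈ Iic (m - a), acoWeight t m a b = (t - 1) * t ^ (m - 1) := by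
  simp_rw [acoWeight, ← Nat.range_succ_eq_Iic, ← mul_sum,
    sum_range_nzWeight_mul_pow_mul_nzWeight_sub ht]
  rw [sum_eq_single_of_mem m (self_mem_range_succ m) fun a ha ham => by
    rw [if_neg (by grind), mul_zero]]
  obtain ⟨k, rfl⟩ : ∃ k, m = k + 1 := ⟨m - 1, by omega⟩
  rw [Nat.sub_self, if_pos rfl, mul_one, nzWeight, if_neg k.succ_ne_zero, Nat.add_sub_cancel]
  field_simp
  ring

end OneCoordinate

section Compositions

variable {l : ℕ}

theorem pow_ell_eq_prod {M : Type*} [CommMonoid M] (x : M) (τ : Fin l → ℕ) :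
    x ^ ell τ = ∏ i, nzWeight x (τ i) := by
  rw [ell, ← prod_const, prod_filter]
  congr 1 with i
  by_cases h : τ i = 0 <;> simp [nzWeight, h]

theorem hasFiniteSupport_sum_Cset {M : Type*} [AddCommMonoid M] (ν : Fin l → ℕ)
    (g : (Fin l → ℕ) → M) : Function.HasFiniteSupport fun k => ∑ τ ∈ Cset ν k, g τ := by
  refine ((Iic ν).image fun τ => ∑ i, τ i).finite_toSet.subset fun k hk => ?_
  obtain ⟨τ, hτ, -⟩ := exists_ne_zero_of_sum_ne_zero hk
  rw [Cset, mem_filter] at hτ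
  exact mem_image.2 ⟨τ, hτ⟩

theorem finsum_sum_Cset {M : Type*} [AddCommMonoid M] (ν : Fin l → ℕ) (g : (Fin l → ℕ) → M) :
    ∑ᶠ k, ∑ τ ∈ Cset ν k, g τ = ∑ τ ∈ Iic ν, g τ :=
  finsum_sum_filter (fun τ => ∑ i, τ i) (Iic ν) g

theorem finsum_finsum_sum_Cset {M : Type*} [AddCommMonoid M] (mu : Fin l → ℕ)
    (g : (Fin l → ℕ) → (Fin l → ℕ) → M) :
    ∑ᶠ i, ∑ᶠ j, ∑ τ ∈ Cset mu i, ∑ θ ∈ Cset (mu - τ) j, g τ θ =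
      ∑ τ ∈ Iic mu, ∑ θ ∈ Iic (mu - τ), g τ θ := by
  calc _ = ∑ᶠ i, ∑ τ ∈ Cset mu i, ∑ᶠ j, ∑ θ ∈ Cset (mu - τ) j, g τ θ :=
        finsum_congr fun i => finsum_sum_comm _ _ fun τ _ => hasFiniteSupport_sum_Cset _ _
    _ = _ := by simp_rw [finsum_sum_Cset]

theorem sum_Iic_sum_Iic_sub_prod {R : Type*} [CommSemiring R] (mu : Fin l → ℕ)
    (f : Fin l → ℕ → ℕ → R) :
    ∑ τ ∈ Iic mu, ∑ θ ∈ Iic (mu - τ), ∏ i, f i (τ i) (θ i) =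
      ∏ i, ∑ a ∈ Iic (mu i), ∑ b ∈ Iic (mu i - a), f i a b := by
  calc _ = ∑ τ ∈ Iic mu, ∏ i, ∑ b ∈ Iic (mu i - τ i), f i (τ i) b :=
        sum_congr rfl fun τ _ => (prod_univ_sum (fun i => Iic (mu i - τ i)) _).symm
    _ = _ := (prod_univ_sum (fun i => Iic (mu i)) fun i a => ∑ b ∈ Iic (mu i - a), f i a b).symm

theorem aco_mul_pow (t : FF) (mu : Fin l → ℕ) (i j : ℕ) :
    aco t mu i j * t ^ (i + j) =
      ∑ τ ∈ Cset mu i, ∑ θ ∈ Cset (mu - τ) j, ∏ k, acoWeight t (mu k) (τ k) (θ k) := by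
  rw [aco, sum_mul]
  refine sum_congr rfl fun τ hτ => ?_
  rw [sum_mul]
  refine sum_congr rfl fun θ hθ => ?_
  rw [Cset, mem_filter] at hτ hθ
  rw [← hτ.2, ← hθ.2, pow_add, pow_add, pow_ell_eq_prod, pow_ell_eq_prod, pow_ell_eq_prod,
    ← prod_pow_eq_pow_sum, ← prod_pow_eq_pow_sum]
  simp only [← prod_mul_distrib]
  refine prod_congr rfl fun k _ => ?_
  simp only [acoWeight, Pi.sub_apply]
  ring

theorem prod_mul_pow_pred {M : Type*} [CommMonoid M] (x y : M) (mu : Fin l → ℕ)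
    (hmu : ∀ i, 0 < mu i) : ∏ i, x * y ^ (mu i - 1) = x ^ l * y ^ (∑ i, mu i - l) := by
  have hsum : ∑ i, (mu i - 1) = ∑ i, mu i - l := by
    rw [sum_tsub_distrib _ fun i _ => hmu i]
    simp
  rw [prod_mul_distrib, prod_const, card_univ, Fintype.card_fin, prod_pow_eq_pow_sum, hsum]

end Compositions

theorem aco_sum_qq_general (l n : ℕ) (mu : Fin l → ℕ)
    (hmu_pos : ∀ i, 0 < mu i)
    (hmu_sum : ∑ i, mu i = n) :
    (∑ᶠ i : ℕ, ∑ᶠ j : ℕ, aco tv mu i j * tv ^ (i + j)) =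
        ∏ i : Fin l, (tv - 1) * tv ^ (mu i - 1) ∧
      (∏ i : Fin l, (tv - 1) * tv ^ (mu i - 1)) = (tv - 1) ^ l * tv ^ (n - l) := by
  have htv : tv ≠ 0 := RatFunc.X_ne_zero
  refine ⟨?_, hmu_sum ▸ prod_mul_pow_pred _ _ mu hmu_pos⟩
  rw [finsum_congr fun i => finsum_congr fun j => aco_mul_pow tv mu i j,
    finsum_finsum_sum_Cset, sum_Iic_sum_Iic_sub_prod]
  exact prod_congr rfl fun i _ => sum_Iic_sum_Iic_sub_acoWeight htv (hmu_pos i)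

/-- Corollary 3.9, first identity:
Σ_{i,j≥0} a_{ij}(μ;q) q^{i+j} = ∏_{i=1}^{l} (q-1) q^{μ_i-1} = (q-1)^l q^{n-l}. -/
theorem aco_sum_qq (l n : ℕ) (mu : Fin l → ℕ)
    (hmu_anti : ∀ i j : Fin l, i ≤ j → mu j ≤ mu i) (hmu_pos : ∀ i, 0 < mu i)
    (hmu_sum : ∑ i, mu i = n) :
    (∑ᶠ i : ℕ, ∑ᶠ j : ℕ, aco tv mu i j * tv ^ (i + j)) =
        ∏ i : Fin l, (tv - 1) * tv ^ (mu i - 1) ∧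
      (∏ i : Fin l, (tv - 1) * tv ^ (mu i - 1)) = (tv - 1) ^ l * tv ^ (n - l) :=
  aco_sum_qq_general l n mu hmu_pos hmu_sum

end
end

section
/- Let μ = (μ_1, …, μ_l) be a partition of n with l = l(μ) nonzero parts. Then the weighted sum of all q-rook monoid characters over two-row shapes satisfies Σ_{m=0}^{n} Σ_{k=0}^{⌊m/2⌋} (m−2k+1) · χ^{(m−k,k)}_μ(q) = q^{n−l(μ)} · ∏_{i=1}^{l} ( 3μ_i − 3q^{-1}(μ_i−1) + (μ_i−1)(μ_i−2)(1−q^{-1})^2/2 ). -/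
open Finset

noncomputable section

/-!
By Jacobi–Trudi, `s_{(m-k,k)} = h_k h_{m-k} - h_{k-1} h_{m-k+1}`, so the weights `m - 2k + 1`
telescope to `G_m := Σ_j h_j h_{m-j}` (`hhDouble m`). Since
`Σ_m G_m z^m = exp (Σ_k 2 p_k z^k / k)`, the `p_λ`-coefficient of `G_m` is `2^{ℓ(λ)} / z_λ`, so
pairing a symmetric function of degree at most `n` with `Σ_{m ≤ n} G_m` specialises it at
`p_k = 2`. Hence the left side is `q^n / (q - 1)^l · ∏_i q̂_{μ_i}(q⁻¹)|_{p_k = 2}`. At `p_k = 2`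
the generating function of `q̂(a)` is `((1 - a z) / (1 - z))^3`, whose coefficients obey a
three-term recursion; solving it gives `(1 - a)` times the `i`-th factor of the product.
-/

open MvPolynomial Finsupp

section WeightFiltration

variable {σ R : Type*} [CommSemiring R] (w : σ → ℕ)

def weightLE (n : ℕ) : Submodule R (MvPolynomial σ R) :=
  restrictSupport R {d | weight w d ≤ n}

variable {w}

lemma mem_weightLE {n : ℕ} {p : MvPolynomial σ R} :
    p ∈ weightLE w n ↔ ∀ d ∈ p.support, weight w d ≤ n :=
  mem_restrictSupport_iff R

lemma weightLE_mono {a b : ℕ} (h : a ≤ b) : weightLE (R := R) w a ≤ weightLE w b :=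
  restrictSupport_mono R fun _ hd => le_trans hd h

open scoped Pointwise in
lemma mul_mem_weightLE {a b : ℕ} {p q : MvPolynomial σ R} (hp : p ∈ weightLE w a)
    (hq : q ∈ weightLE w b) : p * q ∈ weightLE w (a + b) := by
  have hpq : p * q ∈ restrictSupport R ({d | weight w d ≤ a} + {d | weight w d ≤ b}) := by
    rw [restrictSupport_add]
    exact Submodule.mul_mem_mul hp hq
  refine restrictSupport_mono R ?_ hpq
  rintro _ ⟨d, hd, e, he, rfl⟩
  simp only [Set.mem_ofPred_eq, map_add] at hd he ⊢
  omega

lemma C_mem_weightLE (c : R) : C c ∈ weightLE (σ := σ) w 0 := by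
  rw [weightLE, C_apply, monomial_mem_restrictSupport]
  simp

lemma X_mem_weightLE (i : σ) : (X i : MvPolynomial σ R) ∈ weightLE w (w i) := by
  rw [weightLE, X, monomial_mem_restrictSupport]
  simp [weight_single]

lemma prod_mem_weightLE {ι : Type*} (s : Finset ι) {p : ι → MvPolynomial σ R} {b : ι → ℕ}
    (hp : ∀ i ∈ s, p i ∈ weightLE w (b i)) : ∏ i ∈ s, p i ∈ weightLE w (∑ i ∈ s, b i) := by
  induction s using Finset.cons_induction with
  | empty => simpa using C_mem_weightLE (w := w) (1 : R)
  | cons i s hi ih =>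
    rw [Finset.prod_cons, Finset.sum_cons]
    exact mul_mem_weightLE (hp i (Finset.mem_cons_self i s))
      (ih fun j hj => hp j (Finset.mem_cons_of_mem hj))

end WeightFiltration

def evalTwo : SymF →ₐ[FF] FF := aeval fun _ => 2

lemma evalTwo_eq_sum (f : SymF) :
    evalTwo f = ∑ d ∈ f.support, coeff d f * 2 ^ degree d := by
  rw [evalTwo, aeval_def, eval₂_eq]
  refine Finset.sum_congr rfl fun d _ => ?_
  rw [Finset.prod_pow_eq_pow_sum, degree_apply]
  rfl

def hallRight (f : SymF) : SymF →ₗ[FF] FF where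
  toFun := hall f
  map_add' g h := by
    simp only [hall, coeff_add, mul_add, add_mul, Finset.sum_add_distrib]
  map_smul' c g := by
    simp only [hall, coeff_smul, smul_eq_mul, Finset.mul_sum, RingHom.id_apply]
    exact Finset.sum_congr rfl fun _ _ => by ring

lemma hallRight_apply (f g : SymF) : hallRight f g = hall f g := rfl

lemma zfac_ne_zero (d : ℕ+ →₀ ℕ) : zfac d ≠ 0 :=
  Finset.prod_ne_zero_iff.mpr fun i _ =>
    mul_ne_zero (pow_ne_zero _ (Nat.cast_ne_zero.mpr i.ne_zero))
      (Nat.cast_ne_zero.mpr (Nat.factorial_ne_zero _))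

lemma zfac_eq_mul_zfac_sub_single {d : ℕ+ →₀ ℕ} {i : ℕ+} (hi : d i ≠ 0) :
    zfac d = (i : ℕ) * d i * zfac (d - single i 1) := by
  classical
  set e : ℕ+ →₀ ℕ := d - single i 1
  set F : ℕ+ → ℕ → FF := fun j k => ((j : ℕ) : FF) ^ k * (k.factorial : FF)
  have he : ∀ j, e j = d j - single i 1 j := fun j => tsub_apply d _ j
  have hsub : e.support ⊆ d.support := fun j hj => by
    rw [Finsupp.mem_support_iff, he] at hj
    exact Finsupp.mem_support_iff.mpr (by omega)
  have hze : zfac e = ∏ j ∈ d.support, F j (e j) :=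
    Finset.prod_subset hsub fun j _ hj => by simp [notMem_support_iff.mp hj]
  have hfactor : ∀ j ∈ d.support,
      F j (d j) = (if j = i then ((i : ℕ) : FF) * d i else 1) * F j (e j) := by
    intro j _
    by_cases hji : j = i
    · subst hji
      obtain ⟨c, hc⟩ := Nat.exists_eq_succ_of_ne_zero hi
      simp only [F, if_pos, he, single_eq_same, hc, Nat.succ_sub_one, Nat.factorial_succ,
        pow_succ]
      push_cast
      ring
    · simp [F, hji, he]
  rw [hze, zfac, Finset.prod_congr rfl hfactor, Finset.prod_mul_distrib, Finset.prod_ite_eq',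
    if_pos (Finsupp.mem_support_iff.mpr hi)]

lemma degree_sub_single_add {σ : Type*} {d : σ →₀ ℕ} {i : σ} (hi : d i ≠ 0) :
    degree (d - single i 1) + 1 = degree d := by
  conv_rhs => rw [← sub_add_single_one_cancel hi]
  rw [map_add, degree_single]

lemma sum_range_succPNat_eq_sum_support {M : Type*} [AddCommMonoid M] {d : ℕ+ →₀ ℕ} {m : ℕ}
    (hd : weight PNat.val d ≤ m) (F : ℕ+ → M) (hF : ∀ i, d i = 0 → F i = 0) :
    ∑ k ∈ range m, F k.succPNat = ∑ i ∈ d.support, F i := by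
  classical
  rw [← Finset.sum_image fun a _ b _ h => Nat.succPNat_injective h]
  refine (Finset.sum_subset (fun i hi => ?_) fun i _ hi => hF i (notMem_support_iff.mp hi)).symm
  have hle : (i : ℕ) ≤ m :=
    (le_weight_of_ne_zero' PNat.val (Finsupp.mem_support_iff.mp hi)).trans hd
  have hpos := i.pos
  exact Finset.mem_image.mpr
    ⟨i.natPred, Finset.mem_range.mpr (show (i : ℕ) - 1 < m by omega), PNat.succPNat_natPred i⟩

lemma natCast_weight {σ R : Type*} [CommSemiring R] (w : σ → ℕ) (d : σ →₀ ℕ) :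
    (weight w d : R) = ∑ i ∈ d.support, (w i : R) * d i := by
  rw [weight_apply, Finsupp.sum, Nat.cast_sum]
  exact Finset.sum_congr rfl fun i _ => by rw [smul_eq_mul, Nat.cast_mul, mul_comm]

lemma pow_degree_div_zfac_sub_single (c : FF) {d : ℕ+ →₀ ℕ} {i : ℕ+} (hi : d i ≠ 0) :
    c ^ degree (d - single i 1) / zfac (d - single i 1) =
      c ^ (degree d - 1) * ((i : ℕ) * d i) / zfac d := by
  have hid : ((i : ℕ) : FF) * d i ≠ 0 := mul_ne_zero (Nat.cast_ne_zero.mpr i.ne_zero) (by simpa)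
  rw [zfac_eq_mul_zfac_sub_single hi, ← degree_sub_single_add hi, Nat.add_sub_cancel]
  field_simp [zfac_ne_zero]

lemma weight_val_eq_zero_iff {d : ℕ+ →₀ ℕ} : weight PNat.val d = 0 ↔ d = 0 :=
  have : NonTorsionWeight ℕ PNat.val := nonTorsionWeight_of ℕ _ PNat.ne_zero
  weight_eq_zero_iff_eq_zero PNat.val

theorem coeff_eq_of_newton {c : FF} {g : ℕ → SymF} (h0 : g 0 = 1)
    (hrec : ∀ m : ℕ, (m : FF) • g m = c • ∑ k ∈ range m, g (m - 1 - k) * pp k.succPNat)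
    (m : ℕ) (d : ℕ+ →₀ ℕ) :
    coeff d (g m) = if weight PNat.val d = m then c ^ degree d / zfac d else 0 := by
  classical
  induction m using Nat.strong_induction_on generalizing d with
  | _ m ih =>
  rcases Nat.eq_zero_or_pos m with rfl | hm
  · simp only [h0, coeff_one, weight_val_eq_zero_iff, eq_comm (a := (0 : ℕ+ →₀ ℕ))]
    split_ifs with hd
    · simp [hd, zfac]
    · rfl
  set T : ℕ+ → FF := fun i =>
    if weight PNat.val d = m then c ^ (degree d - 1) * ((i : ℕ) * d i) / zfac d else 0
  have hterm : ∀ k ∈ range m, coeff d (g (m - 1 - k) * pp k.succPNat) = T k.succPNat := by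
    intro k hk
    have hk : k < m := Finset.mem_range.mp hk
    by_cases hi : d k.succPNat = 0
    · simp [pp, coeff_mul_X', T, hi]
    have hw := weight_sub_single_add (w := PNat.val) hi
    rw [pp, coeff_mul_X', if_pos (Finsupp.mem_support_iff.mpr hi), ih (m - 1 - k) (by omega),
      pow_degree_div_zfac_sub_single c hi]
    simp only [T, Nat.succPNat_coe] at hw ⊢
    exact if_congr (by omega) rfl rfl
  have hcoeff := congrArg (coeff d) (hrec m)
  rw [coeff_smul, coeff_smul, coeff_sum, Finset.sum_congr rfl hterm, smul_eq_mul,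
    smul_eq_mul] at hcoeff
  apply mul_left_cancel₀ (Nat.cast_ne_zero.mpr hm.ne' : (m : FF) ≠ 0)
  rw [hcoeff]
  by_cases hwm : weight PNat.val d = m
  · obtain ⟨e, he⟩ : ∃ e, degree d = e + 1 :=
      Nat.exists_eq_succ_of_ne_zero fun h => by
        rw [degree_eq_zero_iff, ← weight_val_eq_zero_iff] at h
        omega
    rw [sum_range_succPNat_eq_sum_support hwm.le T fun i hi => by simp [T, hi]]
    simp only [T, if_pos hwm]
    rw [← Finset.sum_div, ← Finset.mul_sum, ← natCast_weight, hwm, he, Nat.add_sub_cancel,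
      pow_succ]
    ring
  · simp [T, hwm]

lemma hh_newton (m : ℕ) :
    (m : FF) • hh m = ∑ k ∈ range m, hh (m - 1 - k) * pp k.succPNat := by
  rcases m with _ | n
  · simp
  rw [hh, smul_smul, Nat.cast_succ, mul_inv_cancel₀ (Nat.cast_add_one_ne_zero n), one_smul]
  exact Finset.sum_congr rfl fun k _ => by rw [mul_comm, Nat.add_sub_cancel]; rfl

def hhDouble (m : ℕ) : SymF := ∑ j ∈ range (m + 1), hh j * hh (m - j)

lemma hhDouble_newton (m : ℕ) :
    (m : FF) • hhDouble m = (2 : FF) • ∑ k ∈ range m, hhDouble (m - 1 - k) * pp k.succPNat := by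
  have hsplit : (m : FF) • hhDouble m =
      ∑ j ∈ range (m + 1), ((j : FF) • hh j) * hh (m - j)
        + ∑ j ∈ range (m + 1), hh j * (((m - j : ℕ) : FF) • hh (m - j)) := by
    rw [hhDouble, Finset.smul_sum, ← Finset.sum_add_distrib]
    refine Finset.sum_congr rfl fun j hj => ?_
    rw [smul_mul_assoc, mul_smul_comm, ← add_smul, ← Nat.cast_add,
      Nat.add_sub_cancel' (Nat.lt_succ_iff.mp (Finset.mem_range.mp hj))]
  have hsymm : ∑ j ∈ range (m + 1), ((j : FF) • hh j) * hh (m - j) =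
      ∑ j ∈ range (m + 1), hh j * (((m - j : ℕ) : FF) • hh (m - j)) := by
    rw [← Finset.sum_range_reflect]
    refine Finset.sum_congr rfl fun j hj => ?_
    have hj := Finset.mem_range.mp hj
    rw [show m + 1 - 1 - j = m - j by omega, show m - (m - j) = j by omega, mul_comm]
  rw [hsplit, hsymm, ← two_smul FF]
  congr 1
  simp_rw [hh_newton, Finset.mul_sum, hhDouble, Finset.sum_mul]
  refine Finset.sum_comm' (fun j k => ?_) |>.trans (Finset.sum_congr rfl fun k _ =>
    Finset.sum_congr rfl fun j _ => ?_)
  · simp only [Finset.mem_range]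
    omega
  · rw [show m - j - 1 - k = m - 1 - k - j by omega, mul_assoc]

lemma coeff_hhDouble (m : ℕ) (d : ℕ+ →₀ ℕ) :
    coeff d (hhDouble m) = if weight PNat.val d = m then 2 ^ degree d / zfac d else 0 :=
  coeff_eq_of_newton (by simp [hhDouble, hh]) hhDouble_newton m d

lemma hall_sum_hhDouble {f : SymF} {n : ℕ} (hf : f ∈ weightLE PNat.val n) :
    hall f (∑ m ∈ range (n + 1), hhDouble m) = evalTwo f := by
  rw [hall, evalTwo_eq_sum]
  refine Finset.sum_congr rfl fun d hd => ?_
  rw [coeff_sum, Finset.sum_congr rfl fun m _ => coeff_hhDouble m d, Finset.sum_ite_eq,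
    if_pos (Finset.mem_range.mpr (Nat.lt_succ_of_le (mem_weightLE.mp hf d hd))), mul_assoc,
    div_mul_cancel₀ _ (zfac_ne_zero d)]

lemma sum_range_palindrome_eq_sum_nsmul {M : Type*} [AddCommGroup M] (m : ℕ) (t s : ℕ → M)
    (ht : ∀ j ≤ m, t (m - j) = t j) (hs0 : s 0 = t 0)
    (hs : ∀ k < m / 2, s (k + 1) = t (k + 1) - t k) :
    ∑ j ∈ range (m + 1), t j = ∑ k ∈ range (m / 2 + 1), (m - 2 * k + 1) • s k := by
  have htel : ∀ i ≤ m / 2, t i = ∑ k ∈ range (i + 1), s k := by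
    intro i hi
    induction i with
    | zero => simp [hs0]
    | succ i ih => rw [Finset.sum_range_succ, ← ih (by omega), hs i (by omega), add_sub_cancel]
  have hpieri : ∀ j ∈ range (m + 1), t j = ∑ k ∈ range (min j (m - j) + 1), s k := by
    intro j hj
    have hj := Finset.mem_range.mp hj
    rw [← htel _ (by omega)]
    rcases le_total j (m - j) with h | h
    · rw [min_eq_left h]
    · rw [min_eq_right h, ht j (by omega)]
  -- each `s k` is counted once for every `j ∈ [k, m - k]`
  rw [Finset.sum_congr rfl hpieri, Finset.sum_comm' (t' := range (m / 2 + 1))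
    (s' := fun k => Icc k (m - k)) fun j k => by
      simp only [Finset.mem_range, Finset.mem_Icc]
      omega]
  refine Finset.sum_congr rfl fun k hk => ?_
  rw [Finset.sum_const, Nat.card_Icc]
  congr 1
  have := Finset.mem_range.mp hk
  omega

lemma schur_pair_zero (p : ℕ) : schur ![p, 0] = hh p := by
  simp [schur, Matrix.det_fin_two, hZ, hh]

lemma schur_pair_succ (p q : ℕ) :
    schur ![p, q + 1] = hh p * hh (q + 1) - hh (p + 1) * hh q := by
  simp [schur, Matrix.det_fin_two, hZ, show ((q : ℤ) + 1 + 1).toNat - 1 = q + 1 by omega,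
    show (0 : ℤ) ≤ q + 1 by omega, show (0 : ℤ) ≤ p + 1 by omega]

lemma sum_nsmul_schur_two_row (m : ℕ) :
    ∑ k ∈ range (m / 2 + 1), (m - 2 * k + 1) • schur ![m - k, k] = hhDouble m := by
  refine (sum_range_palindrome_eq_sum_nsmul m (fun j => hh j * hh (m - j)) _ (fun j hj => ?_)
    ?_ fun k hk => ?_).symm
  · simp only [Nat.sub_sub_self hj, mul_comm]
  · simp [schur_pair_zero, hh]
  · rw [show m - (k + 1) = m - k - 1 by omega, schur_pair_succ, show m - k - 1 + 1 = m - k by omega,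
      mul_comm (hh (m - k - 1)), mul_comm (hh (m - k))]

lemma qhat_succ (a : FF) (n : ℕ) :
    qhat a (n + 1) = ((n : FF) + 1)⁻¹ • ∑ k ∈ range (n + 1),
      C (1 - a ^ (k + 1)) * (1 + pp k.succPNat) * qhat a (n - k) := by
  rw [qhat]; rfl

lemma qhat_mem_weightLE (a : FF) (m : ℕ) : qhat a m ∈ weightLE PNat.val m := by
  induction m using Nat.strong_induction_on with
  | _ m ih =>
    rcases m with _ | n
    · rw [qhat]
      exact C_mem_weightLE 1
    rw [qhat_succ]
    refine Submodule.smul_mem _ _ (Submodule.sum_mem _ fun k hk => ?_)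
    have hk : k < n + 1 := Finset.mem_range.mp hk
    have h1p : 1 + pp k.succPNat ∈ weightLE PNat.val (k + 1) :=
      Submodule.add_mem _ (weightLE_mono (Nat.zero_le _) (C_mem_weightLE 1))
        (X_mem_weightLE k.succPNat)
    rw [mul_assoc, C_mul']
    refine Submodule.smul_mem _ _ (weightLE_mono ?_ (mul_mem_weightLE h1p (ih (n - k) (by omega))))
    omega

lemma qhatProd_mem_weightLE (a : FF) {l : ℕ} (mu : Fin l → ℕ) :
    qhatProd a mu ∈ weightLE PNat.val (∑ i, mu i) :=
  prod_mem_weightLE _ fun i _ => qhat_mem_weightLE a (mu i)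

lemma evalTwo_qhat_newton (a : FF) (m : ℕ) :
    (m : FF) * evalTwo (qhat a m) =
      3 * ∑ j ∈ range m, (1 - a ^ (m - j)) * evalTwo (qhat a j) := by
  rcases m with _ | n
  · simp
  rw [qhat_succ, map_smul, smul_eq_mul, ← mul_assoc, Nat.cast_succ,
    mul_inv_cancel₀ (Nat.cast_add_one_ne_zero n), one_mul, map_sum, Finset.mul_sum,
    ← Finset.sum_range_reflect]
  refine Finset.sum_congr rfl fun k hk => ?_
  have hk : k < n + 1 := Finset.mem_range.mp hk
  rw [show n + 1 - 1 - k = n - k by omega, show n - (n - k) = k by omega,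
    show n - k + 1 = n + 1 - k by omega]
  simp only [map_mul, map_add, map_one, evalTwo, aeval_C, aeval_X, pp,
    Algebra.algebraMap_self_apply]
  ring

lemma sum_range_one_sub_pow_mul_add_two {R : Type*} [CommRing R] (a : R) (u : ℕ → R) (N : ℕ) :
    ∑ j ∈ range (N + 2), (1 - a ^ (N + 2 - j)) * u j =
      (1 + a) * ∑ j ∈ range (N + 1), (1 - a ^ (N + 1 - j)) * u j
        - a * ∑ j ∈ range N, (1 - a ^ (N - j)) * u j + (1 - a) * u (N + 1) := by
  simp only [Finset.sum_range_succ, show N + 2 - (N + 1) = 1 by omega,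
    show N + 2 - N = 2 by omega, show N + 1 - N = 1 by omega]
  have hj : ∀ j ∈ range N, (1 - a ^ (N + 2 - j)) * u j =
      (1 + a) * ((1 - a ^ (N + 1 - j)) * u j) - a * ((1 - a ^ (N - j)) * u j) := by
    intro j hj
    rw [show N + 2 - j = N - j + 2 by grind, show N + 1 - j = N - j + 1 by grind]
    ring
  rw [Finset.sum_congr rfl hj, Finset.sum_sub_distrib, ← Finset.mul_sum, ← Finset.mul_sum]
  ring

lemma evalTwo_qhat_add_two (a : FF) (N : ℕ) :
    ((N : FF) + 2) * evalTwo (qhat a (N + 2)) =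
      ((1 + a) * (N + 1) + 3 * (1 - a)) * evalTwo (qhat a (N + 1))
        - a * N * evalTwo (qhat a N) := by
  have h2 := evalTwo_qhat_newton a (N + 2)
  have h1 := evalTwo_qhat_newton a (N + 1)
  have h0 := evalTwo_qhat_newton a N
  rw [sum_range_one_sub_pow_mul_add_two] at h2
  push_cast at h2 h1
  linear_combination h2 - (1 + a) * h1 + a * h0

def twoRowFactor (a x : FF) : FF :=
  3 * x - 3 * a * (x - 1) + (x - 1) * (x - 2) * (1 - a) ^ 2 / 2

lemma evalTwo_qhat_one (a : FF) : evalTwo (qhat a 1) = 3 * (1 - a) := by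
  have h := evalTwo_qhat_newton a 1
  rw [Nat.cast_one, one_mul, Finset.sum_range_one, qhat, map_one] at h
  rw [h]
  ring

lemma evalTwo_qhat_succ (a : FF) (m : ℕ) :
    evalTwo (qhat a (m + 1)) = (1 - a) * twoRowFactor a (m + 1) := by
  induction m using Nat.twoStepInduction with
  | zero =>
    rw [evalTwo_qhat_one, twoRowFactor]
    ring
  | one =>
    -- the term `a * 0 * evalTwo (qhat a 0)` vanishes: the closed form is false at `0`
    have h := evalTwo_qhat_add_two a 0
    rw [evalTwo_qhat_one] at h
    apply mul_left_cancel₀ (two_ne_zero (α := FF))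
    push_cast at h ⊢
    rw [twoRowFactor]
    linear_combination h
  | more N ih0 ih1 =>
    have h := evalTwo_qhat_add_two a (N + 1)
    rw [ih0, ih1] at h
    apply mul_left_cancel₀ (Nat.cast_add_one_ne_zero (R := FF) (N + 2))
    push_cast at h ⊢
    simp only [twoRowFactor] at h ⊢
    linear_combination h

theorem chi_two_row_sum_general (l n : ℕ) (mu : Fin l → ℕ)
    (hmu_pos : ∀ i, 0 < mu i)
    (hmu_sum : ∑ i, mu i = n) :
    ∑ m ∈ Finset.range (n + 1), ∑ k ∈ Finset.range (m / 2 + 1),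
        ((m - 2 * k + 1 : ℕ) : FF) * chi (![m - k, k]) mu =
      qv ^ (n - l) *
        ∏ i : Fin l,
          (3 * (mu i : FF) - 3 * qv⁻¹ * ((mu i : FF) - 1) +
            ((mu i : FF) - 1) * ((mu i : FF) - 2) * (1 - qv⁻¹) ^ 2 / 2) := by
  have hell : ell mu = l := by simp [ell, fun i => (hmu_pos i).ne']
  have hln : l ≤ n :=
    hmu_sum ▸ by simpa using Finset.card_nsmul_le_sum univ mu 1 fun i _ => hmu_pos i
  have hq : qv ≠ 0 := RatFunc.X_ne_zero
  have hq1 : qv - 1 ≠ 0 := sub_ne_zero.mpr fun h => by simpa [qv] using congrArg RatFunc.intDegree h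
  have hchi : ∀ lam : Fin 2 → ℕ,
      chi lam mu = qv ^ n / (qv - 1) ^ l * hallRight (qhatProd qv⁻¹ mu) (schur lam) :=
    fun lam => by rw [chi, hmu_sum, hell, hallRight_apply]
  have hfactor : ∀ i, evalTwo (qhat qv⁻¹ (mu i)) = (1 - qv⁻¹) * twoRowFactor qv⁻¹ (mu i) := by
    intro i
    obtain ⟨m, hm⟩ := Nat.exists_eq_succ_of_ne_zero (hmu_pos i).ne'
    rw [hm, evalTwo_qhat_succ, Nat.cast_succ]
  have hprefactor : qv ^ n / (qv - 1) ^ l * (1 - qv⁻¹) ^ l = qv ^ (n - l) := by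
    rw [pow_sub₀ _ hq hln, ← one_div, one_sub_div hq, div_pow]
    field_simp
  calc _ = qv ^ n / (qv - 1) ^ l * hallRight (qhatProd qv⁻¹ mu) (∑ m ∈ range (n + 1),
        ∑ k ∈ range (m / 2 + 1), (m - 2 * k + 1) • schur ![m - k, k]) := by
        simp only [map_sum, map_nsmul]
        simp only [hchi, nsmul_eq_mul, Finset.mul_sum, mul_left_comm]
    _ = qv ^ n / (qv - 1) ^ l * evalTwo (qhatProd qv⁻¹ mu) := by
        simp only [sum_nsmul_schur_two_row, hallRight_apply]
        rw [hall_sum_hhDouble (hmu_sum ▸ qhatProd_mem_weightLE qv⁻¹ mu)]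
    _ = qv ^ (n - l) * ∏ i, twoRowFactor qv⁻¹ (mu i) := by
        rw [qhatProd, map_prod, Finset.prod_congr rfl fun i _ => hfactor i, Finset.prod_mul_distrib,
          Finset.prod_const, Finset.card_fin, ← mul_assoc, hprefactor]

/-- Theorem 3.13 (3.28), weighted sum of the two-row characters: for a partition
μ = (μ_1,…,μ_l) ⊢ n with l nonzero parts,
Σ_{m=0}^{n} Σ_{k=0}^{⌊m/2⌋} (m-2k+1) χ^{(m-k,k)}_μ(q)
  = q^{n-l}·∏_{i=1}^{l} (3μ_i - 3q⁻¹(μ_i-1) + (μ_i-1)(μ_i-2)(1-q⁻¹)²/2). -/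
theorem chi_two_row_sum (l n : ℕ) (mu : Fin l → ℕ)
    (hmu_anti : ∀ i j : Fin l, i ≤ j → mu j ≤ mu i) (hmu_pos : ∀ i, 0 < mu i)
    (hmu_sum : ∑ i, mu i = n) :
    ∑ m ∈ Finset.range (n + 1), ∑ k ∈ Finset.range (m / 2 + 1),
        ((m - 2 * k + 1 : ℕ) : FF) * chi (![m - k, k]) mu =
      qv ^ (n - l) *
        ∏ i : Fin l,
          (3 * (mu i : FF) - 3 * qv⁻¹ * ((mu i : FF) - 1) +
            ((mu i : FF) - 1) * ((mu i : FF) - 2) * (1 - qv⁻¹) ^ 2 / 2) :=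
  chi_two_row_sum_general l n mu hmu_pos hmu_sum

end
end
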